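/- arXiv:1402.3660 — 4 statements merged into one kernel-verified Lean document; each statement's English description precedes it below -/
import Mathlib

section
/- Let (c_{ij})_{1≤i,j≤n} be an array of real numbers and let π be a uniform random permutation of [n]. Set W = ∑_{i=1}^n c_{i,π(i)}. Then Var(W) = (1/(n-1)) ∑_{i,j=1}^n (c_{ij} - r_i - s_j + m)², where r_i = (1/n)∑_k c_{ik}, s_j = (1/n)∑_k c_{kj}, and m = (1/n²)∑_{k,l} c_{kl}. -/
/-!
Subtracting the row and column means from `c` leaves a doubly centred array `d` and shifts `W`
by a constant, so `Var W = E[(∑ᵢ d_{i,π i})²]`. For `i ≠ i'` the pair `(π i, π i')` is uniform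
on the off-diagonal pairs, so since the rows of `d` sum to zero,
`E[d_{i,π i} d_{i',π i'}] = -(n (n - 1))⁻¹ ∑ⱼ d_{ij} d_{i'j}`. Summing over `i' ≠ i` and using
that the columns sum to zero, the cross terms add `(n (n - 1))⁻¹ ∑ d²` to the diagonal `n⁻¹ ∑ d²`.
-/

open Finset

namespace Equiv.Perm

variable {α M : Type*} [Fintype α] [DecidableEq α] [AddCommMonoid M]

theorem card_nsmul_sum_apply (f : α → M) (i : α) :
    Fintype.card α • ∑ π : Perm α, f (π i) = Fintype.card (Perm α) • ∑ j, f j := by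
  have hindep : ∀ k, ∑ π : Perm α, f (π k) = ∑ π : Perm α, f (π i) := fun k =>
    Fintype.sum_equiv (Equiv.mulRight (swap i k)) _ _ (by simp)
  calc Fintype.card α • ∑ π : Perm α, f (π i) = ∑ k, ∑ π : Perm α, f (π k) := by
        simp [hindep]
    _ = ∑ π : Perm α, ∑ k, f (π k) := sum_comm
    _ = Fintype.card (Perm α) • ∑ j, f j := by
        simp [Equiv.sum_comp]

theorem card_offDiag_nsmul_sum_apply_apply (g : α → α → M) {i i' : α} (h : i ≠ i') :
    #(univ : Finset α).offDiag • ∑ π : Perm α, g (π i) (π i') =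
      Fintype.card (Perm α) • ∑ p ∈ univ.offDiag, g p.1 p.2 := by
  have hindep : ∀ p ∈ (univ : Finset α).offDiag,
      ∑ π : Perm α, g (π p.1) (π p.2) = ∑ π : Perm α, g (π i) (π i') := by
    intro p hp
    obtain ⟨τ, hτ, hτ'⟩ := MulAction.is_two_pretransitive_iff.mp
      (isMultiplyPretransitive α 2) h (mem_offDiag.mp hp).2.2
    exact Fintype.sum_equiv (Equiv.mulRight τ) _ _ (by simp [← hτ, ← hτ'])
  calc #(univ : Finset α).offDiag • ∑ π : Perm α, g (π i) (π i')
      = ∑ p ∈ univ.offDiag, ∑ π : Perm α, g (π p.1) (π p.2) := by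
        rw [sum_congr rfl hindep, sum_const]
    _ = ∑ π : Perm α, ∑ p ∈ univ.offDiag, g (π p.1) (π p.2) := sum_comm
    _ = Fintype.card (Perm α) • ∑ p ∈ univ.offDiag, g p.1 p.2 := by
        rw [← card_univ, ← sum_const]
        refine sum_congr rfl fun π _ => ?_
        exact sum_equiv (π.prodCongr π) (by simp [π.injective.ne_iff]) (by simp)

end Equiv.Perm

open Equiv

noncomputable def uniformVariance {ι : Type*} [Fintype ι] (f : ι → ℝ) : ℝ :=
  (∑ x, f x ^ 2) / Fintype.card ι - ((∑ x, f x) / Fintype.card ι) ^ 2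

theorem uniformVariance_add_const {ι : Type*} [Fintype ι] (f : ι → ℝ) (a : ℝ) :
    uniformVariance (fun x => f x + a) = uniformVariance f := by
  rcases isEmpty_or_nonempty ι with hι | hι
  · simp [uniformVariance]
  have hcard : (Fintype.card ι : ℝ) ≠ 0 := by positivity
  simp only [uniformVariance, add_sq, sum_add_distrib, ← sum_mul, ← mul_sum, sum_const,
    card_univ, nsmul_eq_mul]
  field_simp
  ring

section DoubleCentering

variable {α : Type*} [Fintype α]

noncomputable def doubleCenter (c : α → α → ℝ) (i j : α) : ℝ :=
  c i j - (1 / (Fintype.card α : ℝ)) * ∑ k, c i k - (1 / (Fintype.card α : ℝ)) * ∑ k, c k j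
    + (1 / (Fintype.card α : ℝ) ^ 2) * ∑ k, ∑ l, c k l

variable [Nonempty α]

theorem sum_doubleCenter_right (c : α → α → ℝ) (i : α) : ∑ j, doubleCenter c i j = 0 := by
  have hcard : (Fintype.card α : ℝ) ≠ 0 := by positivity
  simp only [doubleCenter, sum_add_distrib, sum_sub_distrib, ← mul_sum, sum_const, card_univ,
    nsmul_eq_mul]
  rw [sum_comm (f := fun k j => c k j)]
  field_simp
  ring

theorem sum_doubleCenter_left (c : α → α → ℝ) (j : α) : ∑ i, doubleCenter c i j = 0 := by
  have hcard : (Fintype.card α : ℝ) ≠ 0 := by positivity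
  simp only [doubleCenter, sum_add_distrib, sum_sub_distrib, ← mul_sum, sum_const, card_univ,
    nsmul_eq_mul]
  field_simp
  ring

theorem sum_apply_perm_eq_sum_doubleCenter_add (c : α → α → ℝ) (π : Perm α) :
    ∑ i, c i (π i) = ∑ i, doubleCenter c i (π i) + (∑ k, ∑ l, c k l) / Fintype.card α := by
  have hcard : (Fintype.card α : ℝ) ≠ 0 := by positivity
  simp only [doubleCenter, sum_add_distrib, sum_sub_distrib, ← mul_sum, sum_const, card_univ,
    nsmul_eq_mul, Equiv.sum_comp π (fun j => ∑ k, c k j)]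
  rw [sum_comm (f := fun k j => c k j)]
  field_simp
  ring

end DoubleCentering

section Moments

variable {α : Type*} [Fintype α] [DecidableEq α] (d : α → α → ℝ)

local notation "n" => (Fintype.card α : ℝ)
local notation "N" => (Fintype.card (Perm α) : ℝ)

theorem sum_perm_sum_apply_eq_zero [Nonempty α] (hrow : ∀ i, ∑ j, d i j = 0) :
    ∑ π : Perm α, ∑ i, d i (π i) = 0 := by
  have hcard : n ≠ 0 := by positivity
  have hmoment : ∀ i, n * ∑ π : Perm α, d i (π i) = 0 := fun i => by
    simpa only [nsmul_eq_mul, hrow, mul_zero] using Perm.card_nsmul_sum_apply (d i) i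
  rw [sum_comm]
  exact sum_eq_zero fun i _ => (mul_eq_zero.mp (hmoment i)).resolve_left hcard

theorem card_mul_sub_one_mul_sum_perm_mul (hrow : ∀ i, ∑ j, d i j = 0) (i i' : α) :
    n * (n - 1) * ∑ π : Perm α, d i (π i) * d i' (π i') =
      N * ((if i = i' then n else 0) - 1) * ∑ j, d i j * d i' j := by
  have hpos : 1 ≤ Fintype.card α := Fintype.card_pos_iff.mpr ⟨i⟩
  split_ifs with h
  · subst h
    have hdiag := Perm.card_nsmul_sum_apply (fun j => d i j * d i j) i
    simp only [nsmul_eq_mul] at hdiag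
    rw [mul_right_comm, hdiag]
    ring
  · have hpair := Perm.card_offDiag_nsmul_sum_apply_apply (fun j j' => d i j * d i' j') h
    rw [offDiag_card, card_univ, nsmul_eq_mul, nsmul_eq_mul, ← Nat.mul_sub_one,
      Nat.cast_mul, Nat.cast_sub hpos, Nat.cast_one] at hpair
    have hoff : ∑ p ∈ (univ : Finset α).offDiag, d i p.1 * d i' p.2 = -∑ j, d i j * d i' j := by
      have hsplit := sum_union (disjoint_diag_offDiag (univ : Finset α))
        (f := fun p => d i p.1 * d i' p.2)
      rw [diag_union_offDiag, sum_product, sum_diag] at hsplit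
      simp only [← mul_sum, hrow, mul_zero, sum_const_zero] at hsplit
      linarith
    rw [hpair, hoff]
    ring

theorem sub_one_mul_sum_perm_sq [Nonempty α] (hrow : ∀ i, ∑ j, d i j = 0)
    (hcol : ∀ j, ∑ i, d i j = 0) :
    (n - 1) * ∑ π : Perm α, (∑ i, d i (π i)) ^ 2 = N * ∑ i, ∑ j, d i j ^ 2 := by
  have hcard : n ≠ 0 := by positivity
  refine mul_left_cancel₀ hcard ?_
  calc n * ((n - 1) * ∑ π : Perm α, (∑ i, d i (π i)) ^ 2)
      = ∑ i, ∑ i', n * (n - 1) * ∑ π : Perm α, d i (π i) * d i' (π i') := by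
        simp only [sq, sum_mul_sum]
        simp only [mul_sum, mul_assoc]
        rw [sum_comm]
        exact sum_congr rfl fun i _ => sum_comm
    _ = ∑ i, ∑ i', N * ((if i = i' then n else 0) - 1) * ∑ j, d i j * d i' j := by
        simp only [card_mul_sub_one_mul_sum_perm_mul d hrow]
    _ = N * (n * ∑ i, ∑ j, d i j ^ 2 - ∑ j, (∑ i, d i j) ^ 2) := by
        simp only [mul_assoc, ← mul_sum]
        congr 1
        simp only [sub_mul, ite_mul, zero_mul, one_mul, sum_sub_distrib, sum_ite_eq, mem_univ,
          if_true]
        have hcross : ∑ j, (∑ i, d i j) ^ 2 = ∑ i, ∑ i', ∑ j, d i j * d i' j := by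
          simp only [sq, sum_mul_sum]
          rw [sum_comm]
          exact sum_congr rfl fun _ _ => sum_comm
        rw [hcross]
        simp only [sq, mul_sum]
    _ = n * (N * ∑ i, ∑ j, d i j ^ 2) := by
        simp only [hcol, zero_pow two_ne_zero, sum_const_zero]
        ring

end Moments

/-- Variance formula for `W = ∑ c_{i,π(i)}` under a uniform random permutation `π`
(Hoeffding's combinatorial variance identity). -/
theorem combinatorial_variance (n : ℕ) (hn : 2 ≤ n) (c : Fin n → Fin n → ℝ) :
    (∑ π : Equiv.Perm (Fin n), (∑ i : Fin n, c i (π i)) ^ 2) /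
        (Fintype.card (Equiv.Perm (Fin n)) : ℝ) -
      ((∑ π : Equiv.Perm (Fin n), ∑ i : Fin n, c i (π i)) /
        (Fintype.card (Equiv.Perm (Fin n)) : ℝ)) ^ 2 =
    (1 / ((n : ℝ) - 1)) *
      ∑ i : Fin n, ∑ j : Fin n,
        (c i j - (1 / (n : ℝ)) * ∑ k : Fin n, c i k
          - (1 / (n : ℝ)) * ∑ k : Fin n, c k j
          + (1 / (n : ℝ) ^ 2) * ∑ k : Fin n, ∑ l : Fin n, c k l) ^ 2 := by
  have hnonempty : Nonempty (Fin n) := ⟨⟨0, by omega⟩⟩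
  have hn1 : (n : ℝ) - 1 ≠ 0 := by
    have : (2 : ℝ) ≤ n := by exact_mod_cast hn
    linarith
  have hsecond := sub_one_mul_sum_perm_sq (doubleCenter c) (sum_doubleCenter_right c)
    (sum_doubleCenter_left c)
  change uniformVariance (fun π : Perm (Fin n) => ∑ i, c i (π i)) = _
  simp only [sum_apply_perm_eq_sum_doubleCenter_add c, uniformVariance_add_const]
  rw [uniformVariance, sum_perm_sum_apply_eq_zero _ (sum_doubleCenter_right c)]
  have hdoubleCenter : ∀ i j, doubleCenter c i j = c i j - (1 / (n : ℝ)) * ∑ k, c i k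
      - (1 / (n : ℝ)) * ∑ k, c k j + (1 / (n : ℝ) ^ 2) * ∑ k, ∑ l, c k l := fun i j => by
    rw [doubleCenter, Fintype.card_fin]
  rw [Fintype.card_fin] at hsecond
  simp only [← hdoubleCenter]
  have hN : (Fintype.card (Perm (Fin n)) : ℝ) ≠ 0 := by positivity
  rw [zero_div, zero_pow two_ne_zero, sub_zero]
  field_simp
  linarith
end

section
/- Let v ∈ ℝ^m be a nonzero vector and let 1 denote the all-ones vector in ℝ^m. If ∑_i v_i² - (1/m)(∑_i v_i)² ≤ κ with κ < |v|²/4, then |v - h·(1/√m)|² ≤ C κ for a universal constant C, where h = |v| · sgn(⟨v, 1/√m⟩). -/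
/-!
With `e = (1/√m, …, 1/√m)` a unit vector and `s = ⟪v, e⟫`, the hypothesis says `‖v‖² - s² ≤ κ`.
Since `|s| ≤ ‖v‖`,
`‖v - ‖v‖ sgn(s) e‖² = 2‖v‖(‖v‖ - |s|) ≤ 2(‖v‖ + |s|)(‖v‖ - |s|) = 2(‖v‖² - s²)`,
so `C = 2` works.
-/

open RealInnerProductSpace

section UnitVector

variable {E : Type*} [NormedAddCommGroup E] [InnerProductSpace ℝ E] {e : E}

theorem norm_sub_norm_smul_sq_le_of_inner_nonneg (he : ‖e‖ = 1) (v : E) (hve : 0 ≤ ⟪v, e⟫) :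
    ‖v - ‖v‖ • e‖ ^ 2 ≤ 2 * (‖v‖ ^ 2 - ⟪v, e⟫ ^ 2) := by
  have hle : ⟪v, e⟫ ≤ ‖v‖ := by simpa [he] using real_inner_le_norm v e
  rw [norm_sub_sq_real, real_inner_smul_right, norm_smul, he, norm_norm]
  nlinarith

theorem norm_sub_sign_inner_smul_sq_le (he : ‖e‖ = 1) (v : E) :
    ‖v - (‖v‖ * Real.sign ⟪v, e⟫) • e‖ ^ 2 ≤ 2 * (‖v‖ ^ 2 - ⟪v, e⟫ ^ 2) := by
  rcases lt_trichotomy ⟪v, e⟫ 0 with hneg | hzero | hpos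
  · have := norm_sub_norm_smul_sq_le_of_inner_nonneg (e := -e) (by rwa [norm_neg]) v
      (by rw [inner_neg_right]; linarith)
    simpa [Real.sign_of_neg hneg, inner_neg_right] using this
  · simp only [hzero, Real.sign_zero, mul_zero, zero_smul, sub_zero]
    nlinarith [sq_nonneg ‖v‖]
  · simpa [Real.sign_of_pos hpos] using norm_sub_norm_smul_sq_le_of_inner_nonneg he v hpos.le

end UnitVector

theorem EuclideanSpace.norm_toLp_const_inv_sqrt_card {ι : Type*} [Fintype ι] [Nonempty ι] :
    ‖WithLp.toLp 2 (fun _ : ι => 1 / √(Fintype.card ι))‖ = 1 := by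
  have hcard : (0 : ℝ) < Fintype.card ι := by exact_mod_cast Fintype.card_pos
  rw [← sq_eq_sq₀ (norm_nonneg _) zero_le_one, EuclideanSpace.real_norm_sq_eq]
  simp [Real.sq_sqrt hcard.le, hcard.ne']

/-- If `∑ v_i² - (1/m)(∑ v_i)² ≤ κ` with `κ < |v|²/4`, then `v` is within distance `√(Cκ)`
of the vector `h·(1/√m)·1`, where `h = |v|·sgn(⟨v, 1/√m⟩)`, for a universal constant `C`. -/
theorem close_to_constant_vector :
    ∃ C : ℝ, 0 < C ∧
      ∀ (m : ℕ), 1 ≤ m → ∀ (v : Fin m → ℝ), v ≠ 0 → ∀ κ : ℝ,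
        (∑ i, (v i) ^ 2) - (1 / (m : ℝ)) * (∑ i, v i) ^ 2 ≤ κ →
        κ < (∑ i, (v i) ^ 2) / 4 →
        ∑ i, (v i - Real.sqrt (∑ i, (v i) ^ 2) *
            Real.sign ((∑ i, v i) / Real.sqrt m) / Real.sqrt m) ^ 2 ≤ C * κ := by
  refine ⟨2, two_pos, fun m hm v _ κ hκ _ => ?_⟩
  have : Nonempty (Fin m) := ⟨⟨0, hm⟩⟩
  set e : EuclideanSpace ℝ (Fin m) := WithLp.toLp 2 (fun _ => 1 / √(m : ℝ))
  set w : EuclideanSpace ℝ (Fin m) := WithLp.toLp 2 v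
  have he : ‖e‖ = 1 := by
    simpa only [Fintype.card_fin] using EuclideanSpace.norm_toLp_const_inv_sqrt_card (ι := Fin m)
  have hw : ‖w‖ = √(∑ i, v i ^ 2) := by
    rw [← Real.sqrt_sq (norm_nonneg w), EuclideanSpace.real_norm_sq_eq]
  have hwe : ⟪w, e⟫ = (∑ i, v i) / √m := by
    simp [e, w, EuclideanSpace.inner_eq_star_dotProduct, dotProduct, div_eq_inv_mul, Finset.mul_sum]
  calc ∑ i, (v i - √(∑ i, v i ^ 2) * Real.sign ((∑ i, v i) / √m) / √m) ^ 2
      = ‖w - (‖w‖ * Real.sign ⟪w, e⟫) • e‖ ^ 2 := by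
        rw [EuclideanSpace.real_norm_sq_eq, hw, hwe]
        simp [e, w, div_eq_mul_inv]
    _ ≤ 2 * (‖w‖ ^ 2 - ⟪w, e⟫ ^ 2) := norm_sub_sign_inner_smul_sq_le he w
    _ ≤ 2 * κ := by
        rw [hwe, EuclideanSpace.real_norm_sq_eq, div_pow, Real.sq_sqrt (Nat.cast_nonneg m)]
        linarith [one_div_mul_eq_div (m : ℝ) ((∑ i, v i) ^ 2)]
end

section
/- For θ ∈ (0,1] and r ∈ (0,1], define G(θ,r) = ∪_{I ⊆ [n], #I ≥ (1-θ)n} G_I(θ,r), where G_I(θ,r) = {x ∈ S^{n-1}_ℂ : ∃ ξ ∈ ℂ, |ξ| ≤ 1, |x_{|I} - (ξ/√(#I)) 1_I| ≤ r}. Then for n ≥ 1/θ, G(θ,r) admits a 3r-net of cardinality at most exp(C n θ log(2/(θr))) for a universal constant C. -/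
/-!
A vector of `G_I(θ,r)` lies within `r` of `(ξ/√#I)·1_I + w`, where `|ξ| ≤ 1` and `w` is its own
restriction to `Iᶜ`, a vector of norm at most `1`. Replacing `ξ` by a point of an `r`-net of the
unit disc and `w` by a point of an `r`-net of the unit ball of `ℂ^{Iᶜ}` moves it by at most `2r`
on `I` and `r` on `Iᶜ`. The volumetric bound `(1 + 2/r)^d` for nets of a `d`-dimensional unit
ball then gives a `3r`-net of `G_I(θ,r)` of size `(1 + 2/r)^{2(#Iᶜ+1)}` with `#Iᶜ ≤ m = ⌊θn⌋`,
and there are at most `∑_{k ≤ m} C(n,k) ≤ (en/m)^m` sets `I`. As `en/m ≤ (2/(θr))^3` and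
`1 + 2/r ≤ (2/(θr))^2`, the union has at most `(2/(θr))^{7m+4} ≤ (2/(θr))^{11θn}` points.
-/

open Finset Metric MeasureTheory Module
open scoped NNReal ENNReal

namespace Metric

variable {E : Type*} [NormedAddCommGroup E] [NormedSpace ℝ E] [FiniteDimensional ℝ E]

theorem IsSeparated.card_le_of_subset_closedBall {ε : ℝ≥0} (hε : 0 < ε) {s : Finset E}
    (hs : IsSeparated ε (s : Set E)) (hsB : (s : Set E) ⊆ closedBall 0 1) :
    (#s : ℝ) ≤ (1 + 2 / ε) ^ finrank ℝ E := by
  let : MeasurableSpace E := borel E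
  have : BorelSpace E := ⟨rfl⟩
  set μ : Measure E := Measure.addHaar
  have hδ : (0 : ℝ) < ε / 2 := by positivity
  have hdisj : (s : Set E).PairwiseDisjoint (ball · (ε / 2)) := fun a ha b hb hab ↦
    ball_disjoint_ball <| by
      have hab : (ε : ℝ≥0∞) < edist a b := hs ha hb hab
      rw [edist_nndist, ENNReal.coe_lt_coe, ← NNReal.coe_lt_coe, coe_nndist] at hab
      linarith
  have hsub : (⋃ a ∈ s, ball a (ε / 2)) ⊆ ball (0 : E) (1 + ε / 2) := by
    simp only [Set.iUnion_subset_iff]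
    intro a ha
    exact ball_subset_ball' (by linarith [mem_closedBall.1 (hsB ha)])
  have hvol : ∑ a ∈ s, μ (ball a (ε / 2)) ≤ μ (ball 0 (1 + ε / 2)) := by
    rw [← measure_biUnion_finset hdisj fun _ _ ↦ measurableSet_ball]
    exact measure_mono hsub
  simp only [Measure.addHaar_ball_of_pos μ _ hδ,
    Measure.addHaar_ball_of_pos μ _ (by positivity : 0 < 1 + (ε : ℝ) / 2), sum_const,
    nsmul_eq_mul, ← mul_assoc] at hvol
  have hB₀ : μ (ball 0 1) ≠ 0 := (measure_ball_pos μ 0 one_pos).ne'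
  have hB₁ : μ (ball 0 1) ≠ ⊤ := measure_ball_lt_top.ne
  rw [ENNReal.mul_le_mul_iff_left hB₀ hB₁, ← ENNReal.ofReal_natCast,
    ← ENNReal.ofReal_mul (by positivity), ENNReal.ofReal_le_ofReal_iff (by positivity),
    ← le_div_iff₀ (by positivity), ← div_pow] at hvol
  refine hvol.trans_eq (congrArg (· ^ _) ?_)
  field_simp
  ring

theorem IsSeparated.encard_le_of_subset_closedBall {ε : ℝ≥0} (hε : 0 < ε) {C : Set E}
    (hC : IsSeparated ε C) (hCB : C ⊆ closedBall 0 1) :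
    C.encard ≤ ⌊(1 + 2 / (ε : ℝ)) ^ finrank ℝ E⌋₊ := by
  by_contra! hlt
  obtain ⟨t, htC, ht⟩ := Set.exists_subset_encard_eq (Order.add_one_le_of_lt hlt)
  obtain ⟨T, rfl⟩ := (Set.finite_of_encard_eq_coe ht).exists_finset_coe
  rw [Set.encard_coe_eq_coe_finsetCard] at ht
  have hT := (hC.subset htC).card_le_of_subset_closedBall hε (htC.trans hCB)
  norm_cast at ht
  rw [ht] at hT
  have := Nat.lt_floor_add_one ((1 + 2 / (ε : ℝ)) ^ finrank ℝ E)
  push_cast at hT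
  linarith

variable (E) in
theorem exists_finset_net_closedBall {ε : ℝ} (hε : 0 < ε) :
    ∃ N : Finset E, (∀ x ∈ closedBall (0 : E) 1, ∃ y ∈ N, dist x y ≤ ε) ∧
      (#N : ℝ) ≤ (1 + 2 / ε) ^ finrank ℝ E := by
  lift ε to ℝ≥0 using hε.le
  have hpack : packingNumber ε (closedBall (0 : E) 1) ≠ ⊤ :=
    ne_top_of_le_ne_top (ENat.natCast_ne_top _) <| iSup₂_le fun C hCB ↦ iSup_le fun hC ↦
      hC.encard_le_of_subset_closedBall (by exact_mod_cast hε) hCB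
  have hfin := Set.encard_ne_top_iff.1 (encard_maximalSeparatedSet hpack ▸ hpack)
  refine ⟨hfin.toFinset, fun x hx ↦ ?_, ?_⟩
  · obtain ⟨y, hy, hxy⟩ := isCover_maximalSeparatedSet hpack hx
    replace hxy : edist x y ≤ ε := hxy
    rw [edist_le_coe, ← NNReal.coe_le_coe, coe_nndist] at hxy
    exact ⟨y, hfin.mem_toFinset.2 hy, hxy⟩
  · refine IsSeparated.card_le_of_subset_closedBall (by exact_mod_cast hε) ?_ ?_
    · simpa using isSeparated_maximalSeparatedSet
    · simpa using maximalSeparatedSet_subset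

end Metric

theorem sum_norm_sub_sq_le {E ι : Type*} [SeminormedAddCommGroup E] (I : Finset ι) (f : ι → E)
    (u v : E) :
    ∑ i ∈ I, ‖f i - v‖ ^ 2 ≤ 2 * ∑ i ∈ I, ‖f i - u‖ ^ 2 + 2 * #I * ‖u - v‖ ^ 2 := by
  have hconst : 2 * #I * ‖u - v‖ ^ 2 = ∑ i ∈ I, 2 * ‖u - v‖ ^ 2 := by
    rw [sum_const, nsmul_eq_mul]
    ring
  rw [hconst, mul_sum, ← sum_add_distrib]
  refine sum_le_sum fun i _ ↦ ?_
  have := norm_add_le (f i - u) (u - v)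
  rw [sub_add_sub_cancel] at this
  nlinarith [norm_nonneg (f i - v), sq_nonneg (‖f i - u‖ - ‖u - v‖)]

theorem card_mul_norm_div_sqrt_card_sq_le {𝕜 ι : Type*} [RCLike 𝕜] (I : Finset ι) (a : 𝕜) :
    #I * ‖a / (Real.sqrt #I : 𝕜)‖ ^ 2 ≤ ‖a‖ ^ 2 := by
  rw [norm_div, RCLike.norm_ofReal, abs_of_nonneg (Real.sqrt_nonneg _), div_pow,
    Real.sq_sqrt (Nat.cast_nonneg _)]
  rcases eq_or_ne (#I : ℝ) 0 with h | h
  · simp [h]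
  · rw [mul_div_cancel₀ _ h]

namespace EuclideanSpace

variable {𝕜 ι : Type*}

def restrict (I : Finset ι) (x : EuclideanSpace 𝕜 ι) : EuclideanSpace 𝕜 I :=
  WithLp.toLp 2 fun j ↦ x j

theorem norm_sq_restrict [RCLike 𝕜] (I : Finset ι) (x : EuclideanSpace 𝕜 ι) :
    ‖restrict I x‖ ^ 2 = ∑ i ∈ I, ‖x i‖ ^ 2 := by
  rw [norm_sq_eq, ← sum_coe_sort I]
  rfl

variable [Fintype ι]

theorem norm_restrict_le [RCLike 𝕜] (I : Finset ι) (x : EuclideanSpace 𝕜 ι) :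
    ‖restrict I x‖ ≤ ‖x‖ := by
  refine (sq_le_sq₀ (norm_nonneg _) (norm_nonneg _)).1 ?_
  rw [norm_sq_restrict, norm_sq_eq]
  exact sum_le_sum_of_subset_of_nonneg (subset_univ I) fun _ _ _ ↦ by positivity

variable [DecidableEq ι]

def piecewiseConst (I : Finset ι) (a : 𝕜) (z : EuclideanSpace 𝕜 ↥Iᶜ) : EuclideanSpace 𝕜 ι :=
  WithLp.toLp 2 fun i ↦ if h : i ∈ Iᶜ then z ⟨i, h⟩ else a

theorem restrict_compl_piecewiseConst (I : Finset ι) (a : 𝕜) (z : EuclideanSpace 𝕜 ↥Iᶜ) :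
    restrict Iᶜ (piecewiseConst I a z) = z := by
  ext j
  simp [restrict, piecewiseConst, mem_compl.1 j.2]

theorem piecewiseConst_apply_of_mem {I : Finset ι} {i : ι} (hi : i ∈ I) (a : 𝕜)
    (z : EuclideanSpace 𝕜 ↥Iᶜ) : piecewiseConst I a z i = a := by
  simp [piecewiseConst, hi]

variable [RCLike 𝕜]

theorem dist_sq_eq_sum_add_dist_restrict_compl (I : Finset ι) (x y : EuclideanSpace 𝕜 ι) :
    dist x y ^ 2 = ∑ i ∈ I, ‖x i - y i‖ ^ 2 + dist (restrict Iᶜ x) (restrict Iᶜ y) ^ 2 := by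
  rw [dist_eq_norm, dist_eq_norm, show restrict Iᶜ x - restrict Iᶜ y = restrict Iᶜ (x - y) from rfl,
    norm_sq_restrict, norm_sq_eq, ← sum_add_sum_compl I]
  rfl

theorem dist_piecewiseConst_le {I : Finset ι} {x : EuclideanSpace 𝕜 ι} {ξ ξ' : 𝕜}
    {z : EuclideanSpace 𝕜 ↥Iᶜ} {r : ℝ}
    (hx : Real.sqrt (∑ i ∈ I, ‖x i - ξ / (Real.sqrt #I : 𝕜)‖ ^ 2) ≤ r) (hξ : dist ξ ξ' ≤ r)
    (hz : dist (restrict Iᶜ x) z ≤ r) :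
    dist x (piecewiseConst I (ξ' / (Real.sqrt #I : 𝕜)) z) ≤ 3 * r := by
  set c : 𝕜 := (Real.sqrt #I : 𝕜)
  have hr : 0 ≤ r := dist_nonneg.trans hz
  have hxI : ∑ i ∈ I, ‖x i - ξ / c‖ ^ 2 ≤ r ^ 2 := (Real.sqrt_le_left hr).1 hx
  have hξI : #I * ‖ξ / c - ξ' / c‖ ^ 2 ≤ r ^ 2 := by
    rw [← sub_div]
    exact (card_mul_norm_div_sqrt_card_sq_le I _).trans
      (pow_le_pow_left₀ (norm_nonneg _) (dist_eq_norm ξ ξ' ▸ hξ) 2)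
  have hsum : ∑ i ∈ I, ‖x i - piecewiseConst I (ξ' / c) z i‖ ^ 2 ≤ 4 * r ^ 2 := by
    rw [sum_congr rfl fun i hi ↦ by rw [piecewiseConst_apply_of_mem hi]]
    linarith [sum_norm_sub_sq_le I x (ξ / c) (ξ' / c)]
  have hdist := dist_sq_eq_sum_add_dist_restrict_compl I x (piecewiseConst I (ξ' / c) z)
  rw [restrict_compl_piecewiseConst] at hdist
  refine (pow_le_pow_iff_left₀ dist_nonneg (by positivity) two_ne_zero).1 ?_
  nlinarith [pow_le_pow_left₀ dist_nonneg hz 2]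

theorem exists_finset_net_almostConstOn (I : Finset ι) {r : ℝ} (hr : 0 < r) :
    ∃ N : Finset (EuclideanSpace 𝕜 ι),
      (∀ x : EuclideanSpace 𝕜 ι, ‖x‖ ≤ 1 → ∀ ξ : 𝕜, ‖ξ‖ ≤ 1 →
        Real.sqrt (∑ i ∈ I, ‖x i - ξ / (Real.sqrt #I : 𝕜)‖ ^ 2) ≤ r → ∃ y ∈ N, dist x y ≤ 3 * r) ∧
      (#N : ℝ) ≤ (1 + 2 / r) ^ (finrank ℝ 𝕜 * (#Iᶜ + 1)) := by
  obtain ⟨N₁, hN₁, hcard₁⟩ := exists_finset_net_closedBall 𝕜 hr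
  obtain ⟨N₂, hN₂, hcard₂⟩ := exists_finset_net_closedBall (EuclideanSpace 𝕜 ↥Iᶜ) hr
  refine ⟨(N₁ ×ˢ N₂).image fun p ↦ piecewiseConst I (p.1 / (Real.sqrt #I : 𝕜)) p.2, ?_, ?_⟩
  · intro x hx ξ hξ hxξ
    obtain ⟨ξ', hξ', hξξ'⟩ := hN₁ ξ (mem_closedBall_zero_iff.2 hξ)
    obtain ⟨z, hz, hxz⟩ :=
      hN₂ (restrict Iᶜ x) (mem_closedBall_zero_iff.2 ((norm_restrict_le _ _).trans hx))
    exact ⟨piecewiseConst I (ξ' / (Real.sqrt #I : 𝕜)) z,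
      mem_image.2 ⟨(ξ', z), mem_product.2 ⟨hξ', hz⟩, rfl⟩, dist_piecewiseConst_le hxξ hξξ' hxz⟩
  · rw [← finrank_mul_finrank ℝ 𝕜 (EuclideanSpace 𝕜 ↥Iᶜ), finrank_euclideanSpace,
      Fintype.card_coe] at hcard₂
    have hcard := (card_image_le (s := N₁ ×ˢ N₂)
      (f := fun p ↦ piecewiseConst I (p.1 / (Real.sqrt #I : 𝕜)) p.2)).trans_eq (card_product N₁ N₂)
    calc _ ≤ (#N₁ * #N₂ : ℝ) := by exact_mod_cast hcard
      _ ≤ (1 + 2 / r) ^ finrank ℝ 𝕜 * (1 + 2 / r) ^ (finrank ℝ 𝕜 * #Iᶜ) := by gcongr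
      _ = (1 + 2 / r) ^ (finrank ℝ 𝕜 * (#Iᶜ + 1)) := by rw [← pow_add]; ring_nf

end EuclideanSpace

theorem sum_range_choose_le_exp_mul_div_pow {n m : ℕ} (hmn : m ≤ n) :
    ∑ k ∈ range (m + 1), (n.choose k : ℝ) ≤ (Real.exp 1 * n / m) ^ m := by
  rcases m.eq_zero_or_pos with rfl | hm
  · simp
  have hnm : 1 ≤ (n : ℝ) / m := by
    rw [one_le_div (by positivity)]
    exact_mod_cast hmn
  calc ∑ k ∈ range (m + 1), (n.choose k : ℝ)
      ≤ ∑ k ∈ range (m + 1), ((n : ℝ) / m) ^ m * ((m : ℝ) ^ k / k.factorial) := by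
        refine sum_le_sum fun k hk ↦ ?_
        calc (n.choose k : ℝ) ≤ (n : ℝ) ^ k / k.factorial := Nat.choose_le_pow_div k n
          _ = ((n : ℝ) / m) ^ k * ((m : ℝ) ^ k / k.factorial) := by
            rw [div_pow, div_mul_div_comm, mul_comm ((m : ℝ) ^ k) _,
              mul_div_mul_right _ _ (by positivity)]
          _ ≤ ((n : ℝ) / m) ^ m * ((m : ℝ) ^ k / k.factorial) := by
            gcongr
            exact Nat.lt_succ_iff.1 (mem_range.1 hk)
    _ = ((n : ℝ) / m) ^ m * ∑ k ∈ range (m + 1), (m : ℝ) ^ k / k.factorial := (mul_sum ..).symm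
    _ ≤ ((n : ℝ) / m) ^ m * Real.exp m := by
        gcongr
        exact Real.sum_le_exp_of_nonneg (by positivity) _
    _ = (Real.exp 1 * n / m) ^ m := by rw [← Real.exp_one_pow, mul_div_assoc, mul_pow, mul_comm]

theorem card_filter_card_compl_le_exp_mul_div_pow {ι : Type*} [Fintype ι] [DecidableEq ι] {m : ℕ}
    (hm : m ≤ Fintype.card ι) :
    (#{I : Finset ι | #Iᶜ ≤ m} : ℝ) ≤ (Real.exp 1 * Fintype.card ι / m) ^ m := by
  have hcount : #{I : Finset ι | #Iᶜ ≤ m} ≤ ∑ k ∈ range (m + 1), (Fintype.card ι).choose k :=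
    calc #{I : Finset ι | #Iᶜ ≤ m}
        ≤ #((range (m + 1)).biUnion fun k ↦ powersetCard k (univ : Finset ι)) :=
          card_le_card_of_injOn compl
            (fun I hI ↦ mem_biUnion.2 ⟨#Iᶜ, mem_range.2 (Nat.lt_succ_of_le (mem_filter.1 hI).2),
              mem_powersetCard.2 ⟨subset_univ _, rfl⟩⟩)
            compl_injective.injOn
      _ ≤ ∑ k ∈ range (m + 1), #(powersetCard k (univ : Finset ι)) := card_biUnion_le
      _ = ∑ k ∈ range (m + 1), (Fintype.card ι).choose k := by simp
  calc (#{I : Finset ι | #Iᶜ ≤ m} : ℝ)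
      ≤ ∑ k ∈ range (m + 1), ((Fintype.card ι).choose k : ℝ) := by exact_mod_cast hcount
    _ ≤ (Real.exp 1 * Fintype.card ι / m) ^ m := sum_range_choose_le_exp_mul_div_pow hm

theorem card_compl_le_floor {ι : Type*} [Fintype ι] [DecidableEq ι] {θ : ℝ} {I : Finset ι}
    (hI : (1 - θ) * Fintype.card ι ≤ #I) : #Iᶜ ≤ ⌊θ * Fintype.card ι⌋₊ := by
  refine Nat.le_floor ?_
  rw [card_compl, Nat.cast_sub (card_le_univ I)]
  linarith

theorem le_two_mul_floor {α : Type*} [Field α] [LinearOrder α] [IsStrictOrderedRing α]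
    [FloorSemiring α] {a : α} (ha : 1 ≤ a) : a ≤ 2 * ⌊a⌋₊ := by
  have h₁ : (1 : α) ≤ ⌊a⌋₊ := by exact_mod_cast Nat.floor_pos.2 ha
  linarith [Nat.lt_floor_add_one a]

theorem exp_mul_div_pow_mul_pow_le_exp {n m : ℕ} {θ r : ℝ} (hθ : θ ∈ Set.Ioc 0 1)
    (hr : r ∈ Set.Ioc 0 1) (hm : 0 < m) (hmθ : m ≤ θ * n) (hθm : θ * n ≤ 2 * m) :
    (Real.exp 1 * n / m) ^ m * (1 + 2 / r) ^ (2 * (m + 1)) ≤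
      Real.exp (11 * n * θ * Real.log (2 / (θ * r))) := by
  obtain ⟨hθ₀, hθ₁⟩ := hθ
  obtain ⟨hr₀, hr₁⟩ := hr
  set X := 2 / (θ * r)
  have hXθ : 2 / θ ≤ X := by
    rw [div_le_div_iff_of_pos_left two_pos hθ₀ (by positivity)]
    nlinarith
  have hXr : 2 / r ≤ X := by
    rw [div_le_div_iff_of_pos_left two_pos hr₀ (by positivity)]
    nlinarith
  have hX : 2 ≤ X := (le_div_self two_pos.le hr₀ hr₁).trans hXr
  have hnm : Real.exp 1 * n / m ≤ X ^ 3 := by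
    have hm' : (0 : ℝ) < m := by exact_mod_cast hm
    calc Real.exp 1 * n / m ≤ 3 * (2 / θ) := by
          rw [div_le_iff₀ hm', mul_assoc]
          gcongr
          · linarith [Real.exp_one_lt_d9]
          · rw [div_mul_eq_mul_div, le_div_iff₀ hθ₀]
            linarith
      _ ≤ 4 * X := by linarith
      _ ≤ X ^ 3 := by
          nlinarith [mul_le_mul_of_nonneg_left (show 4 ≤ X ^ 2 by nlinarith) (by linarith : 0 ≤ X)]
  have hrX : 1 + 2 / r ≤ X ^ 2 := by
    have : 1 ≤ 2 / r := by rw [le_div_iff₀ hr₀]; linarith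
    nlinarith
  calc (Real.exp 1 * n / m) ^ m * (1 + 2 / r) ^ (2 * (m + 1))
      ≤ (X ^ 3) ^ m * (X ^ 2) ^ (2 * (m + 1)) := by gcongr
    _ = X ^ (7 * m + 4) := by ring_nf
    _ ≤ X ^ (11 * m) := pow_le_pow_right₀ (by linarith) (by omega)
    _ = Real.exp (11 * m * Real.log X) := by
        rw [← Real.exp_log (by positivity : 0 < X), ← Real.exp_nat_mul, Real.log_exp]
        push_cast
        ring
    _ ≤ Real.exp (11 * n * θ * Real.log X) := by
        refine Real.exp_le_exp.2 (mul_le_mul_of_nonneg_right ?_ (Real.log_nonneg (by linarith)))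
        linarith

/-- Net for the set `G(θ,r)` of unit vectors of `ℂ^n` which, on some set `I` of at least
`(1-θ)n` coordinates, are within `r` of a multiple `(ξ/√#I)·1_I` with `|ξ| ≤ 1`: for
`n ≥ 1/θ` it admits a `3r`-net of cardinality at most `exp(C n θ log(2/(θr)))`. -/
theorem almost_constant_vectors_net :
    ∃ C : ℝ, 0 < C ∧
      ∀ (n : ℕ) (θ r : ℝ), θ ∈ Set.Ioc (0 : ℝ) 1 → r ∈ Set.Ioc (0 : ℝ) 1 →
        1 / θ ≤ (n : ℝ) →
        ∃ N : Finset (EuclideanSpace ℂ (Fin n)),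
          (∀ x : EuclideanSpace ℂ (Fin n), ‖x‖ = 1 →
              (∃ I : Finset (Fin n), (1 - θ) * n ≤ (I.card : ℝ) ∧
                ∃ ξ : ℂ, ‖ξ‖ ≤ 1 ∧
                  Real.sqrt (∑ i ∈ I, ‖x i - ξ / (Real.sqrt I.card : ℂ)‖ ^ 2) ≤ r) →
              ∃ y ∈ N, dist x y ≤ 3 * r) ∧
          (N.card : ℝ) ≤ Real.exp (C * n * θ * Real.log (2 / (θ * r))) := by
  refine ⟨11, by norm_num, fun n θ r hθ hr hn ↦ ?_⟩
  have hθn : 1 ≤ θ * n := by rwa [div_le_iff₀ hθ.1, mul_comm] at hn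
  have hr₀ : 0 < r := hr.1
  set m := ⌊θ * n⌋₊
  choose N hN hcard using fun I : Finset (Fin n) ↦
    EuclideanSpace.exists_finset_net_almostConstOn (𝕜 := ℂ) I hr₀
  set S : Finset (Finset (Fin n)) := {I | #Iᶜ ≤ m}
  refine ⟨S.biUnion N, ?_, ?_⟩
  · rintro x hx ⟨I, hI, ξ, hξ, hxξ⟩
    obtain ⟨y, hy, hxy⟩ := hN I x hx.le ξ hξ hxξ
    refine ⟨y, mem_biUnion.2 ⟨I, mem_filter.2 ⟨mem_univ I, ?_⟩, hy⟩, hxy⟩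
    simpa using card_compl_le_floor (θ := θ) (I := I) (by simpa using hI)
  · have hS : (#S : ℝ) ≤ (Real.exp 1 * n / m) ^ m := by
      simpa using card_filter_card_compl_le_exp_mul_div_pow (ι := Fin n) (m := m)
        (by simpa using Nat.floor_le_of_le (by nlinarith [hθ.2]))
    have hNI : ∀ I ∈ S, (#(N I) : ℝ) ≤ (1 + 2 / r) ^ (2 * (m + 1)) := fun I hI ↦
      (hcard I).trans <| pow_le_pow_right₀ (by linarith [div_pos two_pos hr₀])
        (by rw [Complex.finrank_real_complex]; have := (mem_filter.1 hI).2; omega)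
    calc (#(S.biUnion N) : ℝ) ≤ ∑ I ∈ S, (#(N I) : ℝ) := by exact_mod_cast card_biUnion_le
      _ ≤ #S * (1 + 2 / r) ^ (2 * (m + 1)) := by
        rw [← nsmul_eq_mul, ← sum_const]
        exact sum_le_sum hNI
      _ ≤ (Real.exp 1 * n / m) ^ m * (1 + 2 / r) ^ (2 * (m + 1)) := by gcongr
      _ ≤ Real.exp (11 * n * θ * Real.log (2 / (θ * r))) :=
        exp_mul_div_pow_mul_pow_le_exp hθ hr (Nat.floor_pos.2 hθn) (Nat.floor_le (by positivity))
          (le_two_mul_floor hθn)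
end

section
/- Let s_1 ≥ ... ≥ s_n > 0 be positive reals, let γ ∈ (0,1), β > 0, and suppose s_n ≥ n^{-β}, s_{n-i} ≥ c i/n for all n^γ ≤ i ≤ n-1, and (1/n)∑_i s_i² ≤ D. Then for α > 0 small enough (depending only on β, γ) there is a constant C (depending on α, c, D) such that (1/n) ∑_{i=1}^n (s_i^α + s_i^{-α}) ≤ C, where C can be taken as D^{α/2} + n^{βα + γ - 1} + C_α. -/
open Finset

/-!
The positive moment is controlled by the power-mean inequality against the second moment.
For the negative moment, read the values from the smallest upwards, `σ k = s (n - k)`: the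
`⌈n^γ⌉` smallest ones are each at least `n^{-β}`, contributing at most `(n^γ + 1) n^{βα}`,
and every other one is at least `c k / n`, contributing at most `(n / c)^α ∑_{k ≤ n} k^{-α}`.
The last sum is at most `n^{1-α} / (1 - α)` by telescoping Bernoulli's inequality
`(1 - 1/x)^p ≤ 1 - p/x`.
-/

theorem mul_rpow_sub_one_le_rpow_sub_rpow {p x : ℝ} (hp0 : 0 ≤ p) (hp1 : p ≤ 1) (hx : 1 ≤ x) :
    p * x ^ (p - 1) ≤ x ^ p - (x - 1) ^ p := by
  have hx0 : 0 < x := by linarith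
  have hbern : (1 + -x⁻¹) ^ p ≤ 1 + p * -x⁻¹ :=
    rpow_one_add_le_one_add_mul_self (by simpa using inv_le_one_of_one_le₀ hx) hp0 hp1
  calc p * x ^ (p - 1) = x ^ p - x ^ p * (1 + p * -x⁻¹) := by
        rw [Real.rpow_sub_one hx0.ne']; ring
    _ ≤ x ^ p - x ^ p * (1 + -x⁻¹) ^ p := by gcongr
    _ = x ^ p - (x - 1) ^ p := by
        rw [← Real.mul_rpow hx0.le (by simpa using inv_le_one_of_one_le₀ hx)]
        congr 2; field_simp; ring

theorem mul_sum_Icc_rpow_sub_one_le {p : ℝ} (hp0 : 0 ≤ p) (hp1 : p ≤ 1) (n : ℕ) :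
    p * ∑ k ∈ Icc 1 n, (k : ℝ) ^ (p - 1) ≤ (n : ℝ) ^ p := by
  induction n with
  | zero => simpa using Real.rpow_nonneg le_rfl p
  | succ n ih =>
    have hstep := mul_rpow_sub_one_le_rpow_sub_rpow hp0 hp1 (x := n + 1) (by simp)
    rw [sum_Icc_succ_top (by omega), mul_add]
    push_cast
    simp only [add_sub_cancel_right] at hstep
    linarith

theorem sum_Icc_one_eq_sum_range_reflect {M : Type*} [AddCommMonoid M] (f : ℕ → M) (n : ℕ) :
    ∑ i ∈ Icc 1 n, f i = ∑ k ∈ range n, f (n - k) := by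
  rw [range_eq_Ico, sum_Ico_reflect f 0 le_self_add]
  simp [Finset.Ico_add_one_right_eq_Icc]

theorem mean_rpow_le_rpow_mean {ι : Type*} {t : Finset ι} (ht : t.Nonempty) {f : ι → ℝ}
    (hf : ∀ i ∈ t, 0 ≤ f i) {p q : ℝ} (hp : 0 < p) (hpq : p ≤ q) :
    1 / (#t : ℝ) * ∑ i ∈ t, f i ^ p ≤ (1 / (#t : ℝ) * ∑ i ∈ t, f i ^ q) ^ (p / q) := by
  have hcard : (0 : ℝ) < #t := by exact_mod_cast ht.card_pos
  have key := Real.arith_mean_le_rpow_mean t (fun _ ↦ 1 / (#t : ℝ)) (fun i ↦ f i ^ p)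
    (fun _ _ ↦ by positivity) (by simp [hcard.ne'])
    (fun i hi ↦ Real.rpow_nonneg (hf i hi) p) (p := q / p) ((one_le_div hp).2 hpq)
  have hpow : ∀ i ∈ t, (f i ^ p) ^ (q / p) = f i ^ q := fun i hi ↦ by
    rw [← Real.rpow_mul (hf i hi), mul_div_cancel₀ _ hp.ne']
  rwa [← mul_sum, ← mul_sum, sum_congr rfl hpow, one_div_div] at key

section NegativeMoment

variable {n : ℕ} {σ : ℕ → ℝ} {α γ : ℝ}

theorem mean_rpow_neg_filter_lt_le {β : ℝ} (hn : 0 < n) (hα : 0 ≤ α) (hβα : β * α ≤ 1)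
    (hσ : ∀ k < n, (n : ℝ) ^ (-β) ≤ σ k) :
    1 / (n : ℝ) * ∑ k ∈ (range n).filter (fun k : ℕ ↦ (k : ℝ) < n ^ γ), σ k ^ (-α) ≤
      (n : ℝ) ^ (β * α + γ - 1) + 1 := by
  have hnR : (0 : ℝ) < n := by exact_mod_cast hn
  set small := (range n).filter (fun k : ℕ ↦ (k : ℝ) < n ^ γ)
  have hterm : ∀ k ∈ small, σ k ^ (-α) ≤ (n : ℝ) ^ (β * α) := by
    intro k hk
    rw [mem_filter, mem_range] at hk
    calc σ k ^ (-α) ≤ ((n : ℝ) ^ (-β)) ^ (-α) :=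
          Real.rpow_le_rpow_of_nonpos (by positivity) (hσ k hk.1) (by linarith)
      _ = (n : ℝ) ^ (β * α) := by rw [← Real.rpow_mul hnR.le, neg_mul_neg]
  have hcard : (#small : ℝ) ≤ n ^ γ + 1 := by
    have hsub : small ⊆ range ⌈(n : ℝ) ^ γ⌉₊ := fun k hk ↦
      mem_range.2 (Nat.lt_ceil.2 (mem_filter.1 hk).2)
    calc (#small : ℝ) ≤ ⌈(n : ℝ) ^ γ⌉₊ := by
          exact_mod_cast (card_le_card hsub).trans (card_range _).le
      _ ≤ n ^ γ + 1 := (Nat.ceil_lt_add_one (by positivity)).le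
  calc 1 / (n : ℝ) * ∑ k ∈ small, σ k ^ (-α)
      ≤ 1 / n * (#small * (n : ℝ) ^ (β * α)) := by
        gcongr
        simpa using sum_le_card_nsmul _ _ _ hterm
    _ ≤ 1 / n * ((n ^ γ + 1) * (n : ℝ) ^ (β * α)) := by gcongr
    _ = (n : ℝ) ^ (β * α + γ - 1) + (n : ℝ) ^ (β * α - 1) := by
        rw [Real.rpow_sub_one hnR.ne', Real.rpow_sub_one hnR.ne', Real.rpow_add hnR]
        ring
    _ ≤ (n : ℝ) ^ (β * α + γ - 1) + 1 := by
        gcongr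
        exact Real.rpow_le_one_of_one_le_of_nonpos (by exact_mod_cast hn) (by linarith)

theorem mean_rpow_neg_filter_not_lt_le {c : ℝ} (hn : 0 < n) (hα0 : 0 ≤ α) (hα1 : α < 1) (hc : 0 < c)
    (hσ : ∀ k : ℕ, (n : ℝ) ^ γ ≤ k → k < n → c * k / n ≤ σ k) :
    1 / (n : ℝ) * ∑ k ∈ (range n).filter (fun k : ℕ ↦ ¬(k : ℝ) < n ^ γ), σ k ^ (-α) ≤
      c ^ (-α) / (1 - α) := by
  have hnR : (0 : ℝ) < n := by exact_mod_cast hn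
  set large := (range n).filter (fun k : ℕ ↦ ¬(k : ℝ) < n ^ γ)
  have hpos : ∀ k ∈ large, (0 : ℝ) < k := fun k hk ↦ by
    rw [mem_filter, not_lt] at hk
    exact (Real.rpow_pos_of_pos hnR γ).trans_le hk.2
  have hterm : ∀ k ∈ large, σ k ^ (-α) ≤ c ^ (-α) * (n : ℝ) ^ α * (k : ℝ) ^ (-α) := by
    intro k hk
    have hk0 := hpos k hk
    rw [mem_filter, mem_range, not_lt] at hk
    calc σ k ^ (-α) ≤ (c * k / n) ^ (-α) :=
          Real.rpow_le_rpow_of_nonpos (by positivity) (hσ k hk.2 hk.1) (by linarith)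
      _ = c ^ (-α) * (n : ℝ) ^ α * (k : ℝ) ^ (-α) := by
        rw [Real.div_rpow (by positivity) hnR.le, Real.mul_rpow hc.le hk0.le,
          Real.rpow_neg hnR.le α]
        field_simp
  have hsub : large ⊆ Icc 1 n := fun k hk ↦
    mem_Icc.2 ⟨by exact_mod_cast hpos k hk, (mem_range.1 (mem_filter.1 hk).1).le⟩
  have hzeta : ∑ k ∈ Icc 1 n, (k : ℝ) ^ (-α) ≤ (n : ℝ) ^ (1 - α) / (1 - α) := by
    rw [le_div_iff₀ (by linarith), mul_comm, ← sub_sub_cancel_left 1 α]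
    exact mul_sum_Icc_rpow_sub_one_le (by linarith) (by linarith) n
  calc 1 / (n : ℝ) * ∑ k ∈ large, σ k ^ (-α)
      ≤ 1 / n * (c ^ (-α) * n ^ α * ∑ k ∈ large, (k : ℝ) ^ (-α)) := by
        gcongr 1 / (n : ℝ) * ?_
        rw [mul_sum]
        exact sum_le_sum hterm
    _ ≤ 1 / n * (c ^ (-α) * n ^ α * ∑ k ∈ Icc 1 n, (k : ℝ) ^ (-α)) := by gcongr
    _ ≤ 1 / n * (c ^ (-α) * n ^ α * ((n : ℝ) ^ (1 - α) / (1 - α))) := by gcongr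
    _ = c ^ (-α) / (1 - α) := by
        rw [mul_div_assoc', mul_assoc, ← Real.rpow_add hnR, add_sub_cancel, Real.rpow_one]
        field_simp

theorem mean_rpow_neg_le {β c : ℝ} (hn : 0 < n) (hα0 : 0 ≤ α) (hα1 : α < 1) (hβα : β * α ≤ 1)
    (hc : 0 < c) (hσ : ∀ k < n, (n : ℝ) ^ (-β) ≤ σ k)
    (hσ_large : ∀ k : ℕ, (n : ℝ) ^ γ ≤ k → k < n → c * k / n ≤ σ k) :
    1 / (n : ℝ) * ∑ k ∈ range n, σ k ^ (-α) ≤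
      (n : ℝ) ^ (β * α + γ - 1) + 1 + c ^ (-α) / (1 - α) := by
  rw [← sum_filter_add_sum_filter_not (range n) (fun k : ℕ ↦ (k : ℝ) < n ^ γ), mul_add]
  exact add_le_add (mean_rpow_neg_filter_lt_le hn hα0 hβα hσ)
    (mean_rpow_neg_filter_not_lt_le hn hα0 hα1 hc hσ_large)

end NegativeMoment

theorem uniform_integrability_bound_general (γ β c D : ℝ)
    (hγ : γ ∈ Set.Ioo (0 : ℝ) 1) (hc : 0 < c) :
    ∀ α : ℝ, 0 < α → α < 1 → β * α + γ < 1 →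
      ∃ C : ℝ, 0 < C ∧
        ∀ (n : ℕ), 2 ≤ n → ∀ s : ℕ → ℝ,
          (∀ i ∈ Finset.Icc 1 n, 0 < s i) →
          (∀ i ∈ Finset.Icc 1 n, ∀ j ∈ Finset.Icc 1 n, i ≤ j → s j ≤ s i) →
          (n : ℝ) ^ (-β) ≤ s n →
          (∀ i : ℕ, (n : ℝ) ^ γ ≤ (i : ℝ) → i ≤ n - 1 → c * (i : ℝ) / (n : ℝ) ≤ s (n - i)) →
          (1 / (n : ℝ)) * ∑ i ∈ Finset.Icc 1 n, (s i) ^ 2 ≤ D →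
          (1 / (n : ℝ)) * ∑ i ∈ Finset.Icc 1 n, ((s i) ^ α + (s i) ^ (-α)) ≤
            D ^ (α / 2) + (n : ℝ) ^ (β * α + γ - 1) + C := by
  intro α hα0 hα1 hβαγ
  have hCα : 0 < c ^ (-α) / (1 - α) := div_pos (Real.rpow_pos_of_pos hc _) (by linarith)
  refine ⟨1 + c ^ (-α) / (1 - α), by positivity, ?_⟩
  intro n hn s hpos hmono hsn hlow hsum
  have hpos_moment : 1 / (n : ℝ) * ∑ i ∈ Icc 1 n, s i ^ α ≤ D ^ (α / 2) := by
    have hmean := mean_rpow_le_rpow_mean (t := Icc 1 n) ⟨1, mem_Icc.2 ⟨le_rfl, by omega⟩⟩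
      (fun i hi ↦ (hpos i hi).le) hα0 (q := 2) (by linarith)
    simp only [Nat.card_Icc, add_tsub_cancel_right, Real.rpow_two] at hmean
    exact hmean.trans (Real.rpow_le_rpow (by positivity) hsum (by positivity))
  have hneg_moment : 1 / (n : ℝ) * ∑ i ∈ Icc 1 n, s i ^ (-α) ≤
      (n : ℝ) ^ (β * α + γ - 1) + 1 + c ^ (-α) / (1 - α) := by
    rw [sum_Icc_one_eq_sum_range_reflect]
    refine mean_rpow_neg_le (by omega) hα0.le hα1 (by linarith [hγ.1]) hc (fun k hk ↦ ?_)
      (fun k hk hkn ↦ hlow k hk (by omega))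
    exact hsn.trans
      (hmono _ (mem_Icc.2 ⟨by omega, by omega⟩) n (mem_Icc.2 ⟨by omega, le_rfl⟩) (by omega))
  rw [sum_add_distrib, mul_add]
  linarith

/-- Deterministic uniform-integrability estimate for singular values: if `s_1 ≥ ... ≥ s_n > 0`
with `s_n ≥ n^{-β}`, `s_{n-i} ≥ c i/n` for `n^γ ≤ i ≤ n-1`, and `(1/n) ∑ s_i² ≤ D`, then for
`α > 0` small enough, `(1/n) ∑ (s_i^α + s_i^{-α}) ≤ D^{α/2} + n^{βα+γ-1} + C_α`. -/
theorem uniform_integrability_bound (γ β c D : ℝ)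
    (hγ : γ ∈ Set.Ioo (0 : ℝ) 1) (hβ : 0 < β) (hc : 0 < c) (hD : 0 < D) :
    ∀ α : ℝ, 0 < α → α < 1 → β * α + γ < 1 →
      ∃ C : ℝ, 0 < C ∧
        ∀ (n : ℕ), 2 ≤ n → ∀ s : ℕ → ℝ,
          (∀ i ∈ Finset.Icc 1 n, 0 < s i) →
          (∀ i ∈ Finset.Icc 1 n, ∀ j ∈ Finset.Icc 1 n, i ≤ j → s j ≤ s i) →
          (n : ℝ) ^ (-β) ≤ s n →
          (∀ i : ℕ, (n : ℝ) ^ γ ≤ (i : ℝ) → i ≤ n - 1 → c * (i : ℝ) / (n : ℝ) ≤ s (n - i)) →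
          (1 / (n : ℝ)) * ∑ i ∈ Finset.Icc 1 n, (s i) ^ 2 ≤ D →
          (1 / (n : ℝ)) * ∑ i ∈ Finset.Icc 1 n, ((s i) ^ α + (s i) ^ (-α)) ≤
            D ^ (α / 2) + (n : ℝ) ^ (β * α + γ - 1) + C :=
  uniform_integrability_bound_general γ β c D hγ hc
end
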